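/- arXiv:2110.12693 — 7 statements merged into one kernel-verified Lean document; each statement's English description precedes it below -/
import Mathlib

section
/- Let K be an N×N real symmetric matrix with non-negative entries whose eigenvalues are all non-negative (i.e., K is positive semi-definite). Then the function η ↦ ρ(K·diag(η)) is convex on [0,1]^N. -/
open Matrix Polynomial

/-- The spectral radius of a real square matrix: the supremum of the moduli of its
complex eigenvalues (roots of the characteristic polynomial over `ℂ`). -/
noncomputable def specRad {N : ℕ} (M : Matrix (Fin N) (Fin N) ℝ) : ℝ :=
  sSup {r : ℝ | ∃ z : ℂ, ((M.map (algebraMap ℝ ℂ)).charpoly).IsRoot z ∧ r = ‖z‖}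

/-!
Factor `K = Cᴴ C`. Then `K diag(η)` and `C diag(η) Cᴴ` have the same characteristic polynomial,
and `C diag(η) Cᴴ` is symmetric, so its spectral radius is its `L²` operator norm. Since
`η ↦ C diag(η) Cᴴ` is linear, the spectral radius is a norm composed with a linear map,
hence convex (on all of `ℝᴺ`).
-/

theorem spectrum.sSup_norm_image_eq_toReal_spectralRadius {𝕜 A : Type*} [NormedField 𝕜]
    [ProperSpace 𝕜] [NormedRing A] [NormedAlgebra 𝕜 A] [CompleteSpace A] (a : A) :
    sSup (norm '' spectrum 𝕜 a) = (spectralRadius 𝕜 a).toReal := by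
  rcases (spectrum 𝕜 a).eq_empty_or_nonempty with h | h
  · simp [spectralRadius, h]
  obtain ⟨k, hk, hk_eq⟩ := spectrum.exists_nnnorm_eq_spectralRadius_of_nonempty h
  rw [← hk_eq, ENNReal.coe_toReal, coe_nnnorm]
  refine IsGreatest.csSup_eq ⟨Set.mem_image_of_mem _ hk, ?_⟩
  rintro _ ⟨z, hz, rfl⟩
  have : (‖z‖₊ : ENNReal) ≤ ‖k‖₊ := hk_eq ▸ le_iSup₂ (f := fun z _ => (‖z‖₊ : ENNReal)) z hz
  exact_mod_cast this

open scoped ComplexOrder MatrixOrder in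
theorem Matrix.PosSemidef.exists_eq_conjTranspose_mul_self {𝕜 n : Type*} [RCLike 𝕜] [Fintype n]
    [DecidableEq n] {A : Matrix n n 𝕜} (hA : A.PosSemidef) : ∃ B : Matrix n n 𝕜, A = Bᴴ * B :=
  CStarAlgebra.nonneg_iff_eq_star_mul_self.mp hA.nonneg

open scoped Matrix.Norms.L2Operator in
theorem convexOn_norm_map_ofReal {n : Type*} [Fintype n] [DecidableEq n] :
    ConvexOn ℝ Set.univ fun X : Matrix n n ℝ => ‖X.map (algebraMap ℝ ℂ)‖ := by
  refine ⟨convex_univ, fun X _ Y _ a b ha hb _ => ?_⟩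
  have hmap : (a • X + b • Y).map (algebraMap ℝ ℂ) =
      (a : ℂ) • X.map (algebraMap ℝ ℂ) + (b : ℂ) • Y.map (algebraMap ℝ ℂ) := by
    ext i j; simp
  calc ‖(a • X + b • Y).map (algebraMap ℝ ℂ)‖
      ≤ ‖(a : ℂ) • X.map (algebraMap ℝ ℂ)‖ + ‖(b : ℂ) • Y.map (algebraMap ℝ ℂ)‖ :=
        hmap ▸ norm_add_le _ _
    _ = a • ‖X.map (algebraMap ℝ ℂ)‖ + b • ‖Y.map (algebraMap ℝ ℂ)‖ := by
        simp [norm_smul, abs_of_nonneg ha, abs_of_nonneg hb]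

section specRad

variable {N : ℕ}

theorem specRad_eq_sSup_norm_image_spectrum (M : Matrix (Fin N) (Fin N) ℝ) :
    specRad M = sSup (norm '' spectrum ℂ (M.map (algebraMap ℝ ℂ))) := by
  simp only [specRad, ← mem_spectrum_iff_isRoot_charpoly, Set.image, eq_comm]

theorem specRad_mul_comm (A B : Matrix (Fin N) (Fin N) ℝ) :
    specRad (A * B) = specRad (B * A) := by
  simp only [specRad, Matrix.map_mul, charpoly_mul_comm]

open scoped Matrix.Norms.L2Operator in
theorem Matrix.IsHermitian.specRad_eq_norm_map {T : Matrix (Fin N) (Fin N) ℝ}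
    (hT : T.IsHermitian) : specRad T = ‖T.map (algebraMap ℝ ℂ)‖ := by
  have hT' : IsSelfAdjoint (T.map (algebraMap ℝ ℂ)) := hT.map _ fun _ => by simp
  rw [specRad_eq_sSup_norm_image_spectrum, spectrum.sSup_norm_image_eq_toReal_spectralRadius,
    hT'.toReal_spectralRadius_complex_eq_norm]

end specRad

theorem specRad_convexOn_general {N : ℕ} (K : Matrix (Fin N) (Fin N) ℝ)
    (hpsd : K.PosSemidef) :
    ConvexOn ℝ (Set.Icc (0 : Fin N → ℝ) 1)
      (fun η => specRad (K * Matrix.diagonal η)) := by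
  obtain ⟨C, rfl⟩ := hpsd.exists_eq_conjTranspose_mul_self
  open scoped Matrix.Norms.L2Operator in
  have hspec (η : Fin N → ℝ) :
      specRad (Cᴴ * C * diagonal η) = ‖(C * diagonal η * Cᴴ).map (algebraMap ℝ ℂ)‖ := by
    rw [mul_assoc, specRad_mul_comm]
    exact (isHermitian_mul_mul_conjTranspose C (isHermitian_diagonal η)).specRad_eq_norm_map
  simp only [hspec]
  have hlin := convexOn_norm_map_ofReal.comp_linearMap
    (LinearMap.mulRight ℝ Cᴴ ∘ₗ LinearMap.mulLeft ℝ C ∘ₗ diagonalLinearMap (Fin N) ℝ ℝ)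
  exact hlin.subset (Set.subset_univ _) (convex_Icc _ _)

theorem specRad_convexOn {N : ℕ} (K : Matrix (Fin N) (Fin N) ℝ)
    (hK : ∀ i j, 0 ≤ K i j) (hsym : K.IsSymm) (hpsd : K.PosSemidef) :
    ConvexOn ℝ (Set.Icc (0 : Fin N → ℝ) 1)
      (fun η => specRad (K * Matrix.diagonal η)) :=
  specRad_convexOn_general K hpsd
end

section
/- Sylvester's inertia theorem for congruence by positive diagonal scaling: let T' be a real symmetric N×N matrix and let f, g : Fin N → ℝ be strictly positive functions. Set T = diag(f)·T'·diag(g). Then T has real spectrum, and the number of positive eigenvalues of T (counted with algebraic multiplicity) equals the number of positive eigenvalues of T', and similarly for negative eigenvalues. -/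
open Matrix Polynomial

open Classical in
/-- Number of positive eigenvalues of a real matrix, counted with algebraic
multiplicity (as roots of the characteristic polynomial over `ℂ`). -/
noncomputable def posEigCount {N : ℕ} (M : Matrix (Fin N) (Fin N) ℝ) : ℕ :=
  (((M.map (algebraMap ℝ ℂ)).charpoly).roots.filter (fun z => z.im = 0 ∧ 0 < z.re)).card

open Classical in
/-- Number of negative eigenvalues of a real matrix, counted with algebraic
multiplicity. -/
noncomputable def negEigCount {N : ℕ} (M : Matrix (Fin N) (Fin N) ℝ) : ℕ :=
  (((M.map (algebraMap ℝ ℂ)).charpoly).roots.filter (fun z => z.im = 0 ∧ z.re < 0)).card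

/-!
`diag(f) T' diag(g)` has the same characteristic polynomial as `E T' E` with `E = diag(√(f g))`,
because `charpoly (X Y) = charpoly (Y X)`; since `E T' E` is symmetric, the spectrum is real.
As `E T' E` is congruent to `T'`, the counts follow from Sylvester's law of inertia. For that,
let `B = Pᴴ A P` and diagonalise `A` and `B` by unitaries to get `diag(e) = Qᴴ diag(d) Q`. The
block of `Q` from the positive coordinates of `e` to the positive coordinates of `d` is
injective, since a kernel vector `y` would have `∑ eᵢ |yᵢ|² > 0` but `∑ dⱼ |(Q y)ⱼ|² ≤ 0`.
So `B` has at most as many positive eigenvalues as `A`; for invertible `P` the roles swap, and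
negative eigenvalues are handled by negating `d` and `e`.
-/

open Finset

namespace Matrix

section Inertia

variable {𝕜 : Type*} [RCLike 𝕜] {n m : Type*} [Fintype n] [Fintype m] [DecidableEq n]
  [DecidableEq m]

lemma re_star_dotProduct_diagonal_mulVec (d : n → ℝ) (x : n → 𝕜) :
    RCLike.re (star x ⬝ᵥ (diagonal (fun i => (d i : 𝕜)) *ᵥ x)) = ∑ i, d i * ‖x i‖ ^ 2 := by
  simp only [dotProduct, mulVec_diagonal, map_sum, Pi.star_apply, RCLike.star_def]
  refine sum_congr rfl fun i _ => ?_
  rw [mul_left_comm, RCLike.conj_mul, ← RCLike.ofReal_pow, ← RCLike.ofReal_mul, RCLike.ofReal_re]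

lemma card_pos_le_of_diagonal_eq_conjTranspose_mul_mul {d : n → ℝ} {e : m → ℝ}
    {P : Matrix n m 𝕜}
    (h : diagonal (fun i => (e i : 𝕜)) = Pᴴ * diagonal (fun j => (d j : 𝕜)) * P) :
    #{i | 0 < e i} ≤ #{j | 0 < d j} := by
  let s := {i // 0 < e i}
  let t := {j // 0 < d j}
  let Ps : Matrix n s 𝕜 := P.submatrix id Subtype.val
  have hPs : diagonal (fun i : s => (e i : 𝕜)) = Psᴴ * diagonal (fun j => (d j : 𝕜)) * Ps := by
    have := congrArg (fun M => M.submatrix (Subtype.val : s → m) (Subtype.val : s → m)) h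
    simp only [submatrix_diagonal _ _ Subtype.val_injective] at this
    exact this
  let Pts : Matrix t s 𝕜 := P.submatrix Subtype.val Subtype.val
  have hinj : Function.Injective Pts.mulVecLin := by
    rw [← LinearMap.ker_eq_bot, LinearMap.ker_eq_bot']
    intro y hy
    have hform : ∑ i : s, e i * ‖y i‖ ^ 2 = ∑ j, d j * ‖(Ps *ᵥ y) j‖ ^ 2 := by
      rw [← re_star_dotProduct_diagonal_mulVec, ← re_star_dotProduct_diagonal_mulVec, hPs]
      simp only [star_mulVec, dotProduct_mulVec, vecMul_vecMul, Matrix.mul_assoc]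
    have hle : ∑ j, d j * ‖(Ps *ᵥ y) j‖ ^ 2 ≤ 0 := by
      refine sum_nonpos fun j _ => ?_
      by_cases hj : 0 < d j
      · simp [show (Ps *ᵥ y) j = 0 from congrFun hy ⟨j, hj⟩]
      · exact mul_nonpos_of_nonpos_of_nonneg (not_lt.mp hj) (sq_nonneg _)
    have hnonneg : ∀ i ∈ (univ : Finset s), 0 ≤ e i * ‖y i‖ ^ 2 := fun i _ =>
      mul_nonneg i.2.le (sq_nonneg _)
    have hzero := (sum_eq_zero_iff_of_nonneg hnonneg).mp
      (le_antisymm (hform ▸ hle) (sum_nonneg hnonneg))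
    ext i
    simpa [i.2.ne'] using hzero i (mem_univ i)
  simpa [s, t, Fintype.card_subtype] using LinearMap.finrank_le_finrank_of_injective hinj

lemma card_neg_le_of_diagonal_eq_conjTranspose_mul_mul {d : n → ℝ} {e : m → ℝ}
    {P : Matrix n m 𝕜}
    (h : diagonal (fun i => (e i : 𝕜)) = Pᴴ * diagonal (fun j => (d j : 𝕜)) * P) :
    #{i | e i < 0} ≤ #{j | d j < 0} := by
  have hneg : diagonal (fun i => ((-e i : ℝ) : 𝕜)) =
      Pᴴ * diagonal (fun j => ((-d j : ℝ) : 𝕜)) * P := by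
    simp only [RCLike.ofReal_neg, ← diagonal_neg, Matrix.mul_neg, Matrix.neg_mul, h]
  simpa only [Left.neg_pos_iff] using card_pos_le_of_diagonal_eq_conjTranspose_mul_mul hneg

namespace IsHermitian

variable {A : Matrix n n 𝕜} {B : Matrix m m 𝕜}

lemma exists_diagonal_eigenvalues_eq_conjTranspose_mul_mul (hA : A.IsHermitian)
    (hB : B.IsHermitian) {P : Matrix n m 𝕜} (h : B = Pᴴ * A * P) :
    ∃ Q : Matrix n m 𝕜, diagonal (fun i => (hB.eigenvalues i : 𝕜)) =
      Qᴴ * diagonal (fun j => (hA.eigenvalues j : 𝕜)) * Q := by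
  have hdiag := hB.conjStarAlgAut_star_eigenvectorUnitary
  have hspec := hA.spectral_theorem
  simp only [Unitary.conjStarAlgAut_apply, Unitary.coe_star, star_star, Function.comp_def]
    at hdiag hspec
  generalize (hA.eigenvectorUnitary : Matrix n n 𝕜) = UA at hspec
  generalize (hB.eigenvectorUnitary : Matrix m m 𝕜) = UB at hdiag
  generalize diagonal (fun j => (hA.eigenvalues j : 𝕜)) = DA at hspec ⊢
  generalize diagonal (fun i => (hB.eigenvalues i : 𝕜)) = DB at hdiag ⊢
  subst hdiag h hspec
  exact ⟨star UA * P * UB, by simp only [conjTranspose_mul, star_eq_conjTranspose,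
    conjTranspose_conjTranspose, Matrix.mul_assoc]⟩

lemma card_pos_eigenvalues_le (hA : A.IsHermitian) (hB : B.IsHermitian) {P : Matrix n m 𝕜}
    (h : B = Pᴴ * A * P) : #{i | 0 < hB.eigenvalues i} ≤ #{j | 0 < hA.eigenvalues j} :=
  have ⟨_, hQ⟩ := hA.exists_diagonal_eigenvalues_eq_conjTranspose_mul_mul hB h
  card_pos_le_of_diagonal_eq_conjTranspose_mul_mul hQ

lemma card_neg_eigenvalues_le (hA : A.IsHermitian) (hB : B.IsHermitian) {P : Matrix n m 𝕜}
    (h : B = Pᴴ * A * P) : #{i | hB.eigenvalues i < 0} ≤ #{j | hA.eigenvalues j < 0} :=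
  have ⟨_, hQ⟩ := hA.exists_diagonal_eigenvalues_eq_conjTranspose_mul_mul hB h
  card_neg_le_of_diagonal_eq_conjTranspose_mul_mul hQ

theorem inertia_eq_of_conjTranspose_mul_mul {A B : Matrix n n 𝕜} (hA : A.IsHermitian)
    (hB : B.IsHermitian) {P : Matrix n n 𝕜} (hP : IsUnit P) (h : B = Pᴴ * A * P) :
    #{i | 0 < hB.eigenvalues i} = #{i | 0 < hA.eigenvalues i} ∧
      #{i | hB.eigenvalues i < 0} = #{i | hA.eigenvalues i < 0} := by
  obtain ⟨U, rfl⟩ := hP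
  have h' : A = U⁻¹.valᴴ * B * U⁻¹.val := by
    rw [h, ← Matrix.mul_assoc, ← Matrix.mul_assoc, ← conjTranspose_mul, Matrix.mul_assoc,
      Units.mul_inv]
    simp
  exact ⟨le_antisymm (hA.card_pos_eigenvalues_le hB h) (hB.card_pos_eigenvalues_le hA h'),
    le_antisymm (hA.card_neg_eigenvalues_le hB h) (hB.card_neg_eigenvalues_le hA h')⟩

lemma im_eq_zero_of_isRoot_charpoly {H : Matrix n n ℂ} (hH : H.IsHermitian) {z : ℂ}
    (hz : H.charpoly.IsRoot z) : z.im = 0 := by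
  have hz' : z ∈ H.charpoly.roots := (mem_roots (charpoly_monic H).ne_zero).mpr hz
  rw [hH.roots_charpoly_eq_eigenvalues] at hz'
  obtain ⟨i, -, rfl⟩ := Multiset.mem_map.mp hz'
  simp

end IsHermitian

end Inertia

lemma charpoly_diagonal_mul_mul_diagonal {R n : Type*} [CommRing R] [Fintype n] [DecidableEq n]
    {a b c : n → R} (habc : ∀ i, a i * b i = c i * c i) (M : Matrix n n R) :
    (diagonal a * M * diagonal b).charpoly = (diagonal c * M * diagonal c).charpoly := by
  rw [charpoly_mul_comm, ← Matrix.mul_assoc, diagonal_mul_diagonal,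
    charpoly_mul_comm (diagonal c * M), ← Matrix.mul_assoc, diagonal_mul_diagonal]
  simp only [mul_comm (b _), habc]

end Matrix

lemma posEigCount_eq_card_pos_eigenvalues {N : ℕ} {M : Matrix (Fin N) (Fin N) ℝ}
    {H : Matrix (Fin N) (Fin N) ℂ} (hH : H.IsHermitian)
    (h : (M.map (algebraMap ℝ ℂ)).charpoly = H.charpoly) :
    posEigCount M = #{i | 0 < hH.eigenvalues i} := by
  rw [posEigCount, h, hH.roots_charpoly_eq_eigenvalues, Multiset.filter_map, Multiset.card_map]
  simp only [Complex.coe_algebraMap, Function.comp_apply, Complex.ofReal_im, Complex.ofReal_re,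
    true_and, card, filter_val]

lemma negEigCount_eq_card_neg_eigenvalues {N : ℕ} {M : Matrix (Fin N) (Fin N) ℝ}
    {H : Matrix (Fin N) (Fin N) ℂ} (hH : H.IsHermitian)
    (h : (M.map (algebraMap ℝ ℂ)).charpoly = H.charpoly) :
    negEigCount M = #{i | hH.eigenvalues i < 0} := by
  rw [negEigCount, h, hH.roots_charpoly_eq_eigenvalues, Multiset.filter_map, Multiset.card_map]
  simp only [Complex.coe_algebraMap, Function.comp_apply, Complex.ofReal_im, Complex.ofReal_re,
    true_and, card, filter_val]

theorem sylvester_inertia_diagonal_scaling {N : ℕ} (T' : Matrix (Fin N) (Fin N) ℝ)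
    (hT' : T'.IsSymm) (f g : Fin N → ℝ) (hf : ∀ i, 0 < f i) (hg : ∀ i, 0 < g i) :
    (∀ z : ℂ, (((Matrix.diagonal f * T' * Matrix.diagonal g).map
        (algebraMap ℝ ℂ)).charpoly).IsRoot z → z.im = 0) ∧
    posEigCount (Matrix.diagonal f * T' * Matrix.diagonal g) = posEigCount T' ∧
    negEigCount (Matrix.diagonal f * T' * Matrix.diagonal g) = negEigCount T' := by
  set A := T'.map (algebraMap ℝ ℂ)
  have hA : A.IsHermitian :=
    (isHermitian_iff_isSymm.mpr hT').map _ fun x => (Complex.conj_ofReal x).symm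
  set E := diagonal fun i => ((√(f i * g i) : ℝ) : ℂ)
  have hS : (Eᴴ * A * E).IsHermitian := isHermitian_conjTranspose_mul_mul E hA
  have hE : IsUnit E := isUnit_diagonal.mpr <| Pi.isUnit_iff.mpr fun i =>
    isUnit_iff_ne_zero.mpr <| Complex.ofReal_ne_zero.mpr <| Real.sqrt_ne_zero'.mpr <|
      mul_pos (hf i) (hg i)
  have hchar : ((diagonal f * T' * diagonal g).map (algebraMap ℝ ℂ)).charpoly =
      (Eᴴ * A * E).charpoly := by
    have hEE : Eᴴ = E := by simp [E, diagonal_conjTranspose]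
    rw [hEE, Matrix.map_mul, Matrix.map_mul, diagonal_map (map_zero _), diagonal_map (map_zero _)]
    refine charpoly_diagonal_mul_mul_diagonal (fun i => ?_) A
    simp only [Complex.coe_algebraMap, ← Complex.ofReal_mul,
      Real.mul_self_sqrt (mul_pos (hf i) (hg i)).le]
  obtain ⟨hpos, hneg⟩ := hA.inertia_eq_of_conjTranspose_mul_mul hS hE rfl
  refine ⟨fun z hz => hS.im_eq_zero_of_isRoot_charpoly (hchar ▸ hz), ?_, ?_⟩
  · rw [posEigCount_eq_card_pos_eigenvalues hS hchar, posEigCount_eq_card_pos_eigenvalues hA rfl,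
      hpos]
  · rw [negEigCount_eq_card_neg_eigenvalues hS hchar, negEigCount_eq_card_neg_eigenvalues hA rfl,
      hneg]
end

section
/- Key step in the invariant-subspace comparison: if A is compact on E, A' its restriction to a dense subspace E' invariant under A, λ ≠ 0, and x ∈ ker(A − λ·id)^n, then x ∈ E'. (Hence ker((A − λ)^n) ⊆ ker((A' − λ)^n).) -/
/-!
Rescaling by `μ⁻¹` writes `A - μ` as `-μ • (1 - C)` with `C` compact and `C ∘ J = J ∘ C'`.
By Riesz theory the powers `(1 - C) ^ p` have finite-dimensional kernels and closed ranges, and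
for large `p` their kernel and range meet only in `0` (finite ascent, used on `E`) and span the
whole space (finite descent, used on `E'`). Applying `J` to
`E' = ker (1 - C') ^ p + range (1 - C') ^ p` puts the dense range of `J` into the closed subspace
`J (ker (1 - C') ^ p) + range (1 - C) ^ p`, which is therefore `E`; intersecting with
`ker (1 - C) ^ p` and using finite ascent gives `ker (1 - C) ^ p = J (ker (1 - C') ^ p)`.
-/

/-- The algebraic multiplicity of `μ` for a continuous linear endomorphism `T`:
the dimension of the generalized eigenspace `⋃ₖ ker (T - μ·id)^k`. -/
noncomputable def algMult {E : Type*} [NormedAddCommGroup E] [NormedSpace ℂ E]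
    (T : E →L[ℂ] E) (μ : ℂ) : Cardinal :=
  Module.rank ℂ
    ↥(⨆ k : ℕ, LinearMap.ker
      ((((T : E →ₗ[ℂ] E) - μ • LinearMap.id : E →ₗ[ℂ] E) : Module.End ℂ E) ^ k))

open Filter Topology

namespace Module.End

section Semiring

variable {R M : Type*} [Semiring R] [AddCommMonoid M] [Module R M] {f : Module.End R M}

theorem range_pow_constant {p : ℕ} (h : (f ^ p).range = (f ^ (p + 1)).range) (k : ℕ) :
    (f ^ p).range = (f ^ (p + k)).range := by
  induction k with
  | zero => rfl
  | succ k ih =>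
    rw [ih, add_comm p, pow_add, mul_eq_comp, LinearMap.range_comp, h, ← LinearMap.range_comp,
      ← mul_eq_comp, ← pow_add, add_comm k, add_assoc, add_comm 1]

theorem disjoint_ker_pow_range_pow_of_le {m : ℕ} (h : (f ^ (m + m)).ker ≤ (f ^ m).ker) :
    Disjoint (f ^ m).ker (f ^ m).range := by
  rw [Submodule.disjoint_def]
  rintro _ hx ⟨y, rfl⟩
  exact h (by rwa [LinearMap.mem_ker, pow_add, mul_apply])

end Semiring

section Ring

variable {R M : Type*} [Ring R] [AddCommGroup M] [Module R M] {f : Module.End R M}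

theorem codisjoint_ker_pow_range_pow_of_le {m : ℕ} (h : (f ^ m).range ≤ (f ^ (m + m)).range) :
    Codisjoint (f ^ m).ker (f ^ m).range := by
  refine codisjoint_iff.2 (Submodule.eq_top_iff'.2 fun x ↦ ?_)
  obtain ⟨y, hy⟩ := h (LinearMap.mem_range_self (f ^ m) x)
  refine Submodule.mem_sup.2
    ⟨x - (f ^ m) y, ?_, (f ^ m) y, LinearMap.mem_range_self _ y, sub_add_cancel _ _⟩
  rw [LinearMap.mem_ker, map_sub, ← mul_apply, ← pow_add, hy, sub_self]

theorem eventually_codisjoint_ker_pow_range_pow_of_range_pow_succ_eq {p : ℕ}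
    (h : (f ^ (p + 1)).range = (f ^ p).range) :
    ∀ᶠ m in atTop, Codisjoint (f ^ m).ker (f ^ m).range := by
  filter_upwards [eventually_ge_atTop p] with m hm
  obtain ⟨k, rfl⟩ := exists_add_of_le hm
  refine codisjoint_ker_pow_range_pow_of_le ?_
  rw [← range_pow_constant h.symm, show p + k + (p + k) = p + (k + p + k) by ring,
    ← range_pow_constant h.symm]

end Ring

theorem eventually_disjoint_ker_pow_range_pow_of_ker_pow_succ_eq {K V : Type*} [DivisionRing K]
    [AddCommGroup V] [Module K V] {f : Module.End K V} {p : ℕ}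
    (h : (f ^ (p + 1)).ker = (f ^ p).ker) :
    ∀ᶠ m in atTop, Disjoint (f ^ m).ker (f ^ m).range := by
  filter_upwards [eventually_ge_atTop p] with m hm
  obtain ⟨k, rfl⟩ := exists_add_of_le hm
  refine disjoint_ker_pow_range_pow_of_le ?_
  rw [← ker_pow_constant h.symm, show p + k + (p + k) = p + (k + p + k) by ring,
    ← ker_pow_constant h.symm]

end Module.End

theorem le_norm_apply_sub_apply_of_one_sub_mem {R M : Type*} [Ring R] [SeminormedAddCommGroup M]
    [Module R M] {C : Module.End R M} {F : Submodule R M} {u v : M} {δ : ℝ}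
    (hu : ∀ z ∈ F, δ ≤ ‖u - z‖) (hv : v ∈ F) (hCu : (1 - C) u ∈ F) (hCv : (1 - C) v ∈ F) :
    δ ≤ ‖C u - C v‖ := by
  convert hu _ (F.sub_mem (F.add_mem hCu hv) hCv) using 2
  simp only [LinearMap.sub_apply, Module.End.one_apply]
  abel

section RieszTheory

variable {𝕜 X : Type*} [RCLike 𝕜] [NormedAddCommGroup X] [NormedSpace 𝕜 X]

theorem Submodule.exists_mem_norm_eq_one_forall_le_norm_sub {F G : Submodule 𝕜 X}
    (hF : IsClosed (F : Set X)) (hFG : F < G) {r : ℝ} (hr : r < 1) :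
    ∃ u ∈ G, ‖u‖ = 1 ∧ ∀ z ∈ F, r ≤ ‖u - z‖ := by
  obtain ⟨x, hxG, hxF⟩ := SetLike.exists_of_lt hFG
  obtain ⟨⟨u, huG⟩, -, hu, hfar⟩ := riesz_lemma_of_lt_one (F := F.comap G.subtype)
    (hF.preimage continuous_subtype_val) ⟨⟨x, hxG⟩, hxF⟩ hr
  exact ⟨u, huG, hu, fun z hz ↦ hfar ⟨z, hFG.le hz⟩ hz⟩

namespace IsCompactOperator

variable {C : Module.End 𝕜 X}

theorem continuous_one_sub (hC : IsCompactOperator C) : Continuous ⇑(1 - C) :=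
  continuous_id.sub hC.continuous

theorem isClosed_ker_one_sub_pow (hC : IsCompactOperator C) (p : ℕ) :
    IsClosed (((1 - C) ^ p).ker : Set X) := by
  refine isClosed_singleton.preimage (?_ : Continuous ⇑((1 - C) ^ p))
  rw [Module.End.coe_pow]
  exact hC.continuous_one_sub.iterate p

theorem exists_strictMono_tendsto (hC : IsCompactOperator C) {u : ℕ → X} {R : ℝ}
    (hu : ∀ n, ‖u n‖ ≤ R) : ∃ v, ∃ φ : ℕ → ℕ, StrictMono φ ∧ Tendsto (C ∘ u ∘ φ) atTop (𝓝 v) := by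
  obtain ⟨K, hK, hCK⟩ := hC.image_closedBall_subset_compact R
  obtain ⟨v, -, φ, hφ, hv⟩ := hK.tendsto_subseq fun n ↦ hCK ⟨u n, by simpa using hu n, rfl⟩
  exact ⟨v, φ, hφ, hv⟩

theorem exists_lt_norm_sub_lt (hC : IsCompactOperator C) {u : ℕ → X} {R : ℝ}
    (hu : ∀ n, ‖u n‖ ≤ R) {ε : ℝ} (hε : 0 < ε) : ∃ p q, p < q ∧ ‖C (u p) - C (u q)‖ < ε := by
  obtain ⟨v, φ, hφ, hv⟩ := hC.exists_strictMono_tendsto hu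
  obtain ⟨N, hN⟩ := Metric.cauchySeq_iff'.1 hv.cauchySeq ε hε
  refine ⟨φ N, φ (N + 1), hφ N.lt_succ_self, ?_⟩
  simpa [dist_eq_norm, norm_sub_rev] using hN (N + 1) N.le_succ

theorem exists_strictMono_tendsto_of_tendsto_one_sub (hC : IsCompactOperator C) {u : ℕ → X}
    {R : ℝ} (hu : ∀ n, ‖u n‖ ≤ R) {w : X} (hw : Tendsto (fun n ↦ (1 - C) (u n)) atTop (𝓝 w)) :
    ∃ v, ∃ φ : ℕ → ℕ, StrictMono φ ∧ Tendsto (u ∘ φ) atTop (𝓝 v) ∧ (1 - C) v = w := by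
  obtain ⟨v, φ, hφ, hv⟩ := hC.exists_strictMono_tendsto hu
  have hwφ := hw.comp hφ.tendsto_atTop
  -- `u = (1 - C) u + C u`
  have huφ : Tendsto (u ∘ φ) atTop (𝓝 (w + v)) := (hwφ.add hv).congr fun n ↦ by simp
  exact ⟨w + v, φ, hφ, huφ,
    tendsto_nhds_unique ((hC.continuous_one_sub.tendsto _).comp huφ) hwφ⟩

theorem finiteDimensional_ker_one_sub (hC : IsCompactOperator C) :
    FiniteDimensional 𝕜 (1 - C).ker := by
  have hfix : ∀ v ∈ (1 - C).ker, C v = v := fun v hv ↦ (sub_eq_zero.1 (by simpa using hv)).symm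
  have hmaps : ∀ v ∈ (1 - C).ker, C v ∈ (1 - C).ker := fun v hv ↦ (hfix v hv).symm ▸ hv
  have hid : ⇑(C.restrict hmaps) = id := funext fun v ↦ Subtype.ext (hfix v v.2)
  exact .of_isCompactOperator_id
    (hid ▸ hC.restrict hmaps (by simpa using hC.isClosed_ker_one_sub_pow 1))

theorem exists_norm_mkQ_le (hC : IsCompactOperator C) :
    ∃ c ≥ 0, ∀ x, ‖(1 - C).ker.mkQ x‖ ≤ c * ‖(1 - C) x‖ := by
  set f := 1 - C
  set π := f.ker.mkQ
  by_contra! h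
  have hseq (n : ℕ) : ∃ x, ‖x‖ ≤ 2 ∧ ‖π x‖ = 1 ∧ (n + 1) * ‖f x‖ ≤ 1 := by
    obtain ⟨y, hy⟩ := h (n + 1) (by positivity)
    have hpos : 0 < ‖π y‖ := (by positivity : (0 : ℝ) ≤ _).trans_lt hy
    have hnorm : ‖(‖π y‖⁻¹ : 𝕜) • π y‖ = 1 := by
      rw [norm_smul, norm_inv, RCLike.norm_ofReal, abs_norm, inv_mul_cancel₀ hpos.ne']
    obtain ⟨x, hxy, hx⟩ := Submodule.Quotient.norm_mk_lt ((‖π y‖⁻¹ : 𝕜) • π y) one_pos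
    have hfx : f x = (‖π y‖⁻¹ : 𝕜) • f y := by
      rw [← map_smul, ← sub_eq_zero, ← map_sub, ← LinearMap.mem_ker, ← Submodule.Quotient.eq]
      simpa [π] using hxy
    refine ⟨x, by linarith, hnorm ▸ congr(‖$hxy‖), ?_⟩
    rw [hfx, norm_smul, norm_inv, RCLike.norm_ofReal, abs_norm, mul_left_comm]
    exact (inv_mul_le_one₀ hpos).2 hy.le
  choose x hx hπx hfx using hseq
  have hfx0 : Tendsto (fun n ↦ f (x n)) atTop (𝓝 0) := by
    refine squeeze_zero_norm (fun n ↦ ?_) tendsto_one_div_add_atTop_nhds_zero_nat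
    rw [le_div_iff₀ (by positivity), mul_comm]
    exact hfx n
  obtain ⟨v, φ, -, hxv, hfv⟩ := hC.exists_strictMono_tendsto_of_tendsto_one_sub hx hfx0
  have hπv : π v = 0 := (Submodule.Quotient.mk_eq_zero _).2 hfv
  have : Tendsto (fun n ↦ ‖π (x (φ n))‖) atTop (𝓝 ‖π v‖) :=
    ((continuous_quot_mk.tendsto v).comp hxv).norm
  simp [hπx, hπv] at this

theorem isClosed_range_one_sub (hC : IsCompactOperator C) : IsClosed ((1 - C).range : Set X) := by
  set f := 1 - C
  obtain ⟨c, hc0, hc⟩ := hC.exists_norm_mkQ_le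
  refine isSeqClosed_iff_isClosed.1 fun y w hy hyw ↦ ?_
  obtain ⟨R, hR⟩ := isBounded_iff_forall_norm_le.1 (Metric.isBounded_range_of_tendsto y hyw)
  -- preimages of `y n` of almost minimal norm are bounded
  have hpre (n : ℕ) : ∃ x, ‖x‖ ≤ c * R + 1 ∧ f x = y n := by
    obtain ⟨x₀, hx₀⟩ := hy n
    obtain ⟨x, hxx₀, hx⟩ := Submodule.Quotient.norm_mk_lt (f.ker.mkQ x₀) one_pos
    refine ⟨x, ?_, ?_⟩
    · calc ‖x‖ ≤ ‖f.ker.mkQ x₀‖ + 1 := hx.le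
        _ ≤ c * ‖y n‖ + 1 := by grw [hc x₀, hx₀]
        _ ≤ c * R + 1 := by grw [hR _ ⟨n, rfl⟩]
    · rw [← hx₀, ← sub_eq_zero, ← map_sub, ← LinearMap.mem_ker, ← Submodule.Quotient.eq]
      exact hxx₀
  choose x hx hfx using hpre
  obtain ⟨v, -, -, -, hv⟩ :=
    hC.exists_strictMono_tendsto_of_tendsto_one_sub hx (hyw.congr fun n ↦ (hfx n).symm)
  exact ⟨v, hv⟩

theorem exists_one_sub_pow_eq (hC : IsCompactOperator C) (m : ℕ) :
    ∃ D : Module.End 𝕜 X, IsCompactOperator D ∧ (1 - C) ^ m = 1 - D := by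
  induction m with
  | zero => exact ⟨0, isCompactOperator_zero, by simp⟩
  | succ m ih =>
    obtain ⟨D, hD, hDm⟩ := ih
    refine ⟨D + C - D * C, (hD.add hC).sub (hC.continuous_comp hD.continuous), ?_⟩
    rw [pow_succ, hDm]
    noncomm_ring

theorem finiteDimensional_ker_one_sub_pow (hC : IsCompactOperator C) (m : ℕ) :
    FiniteDimensional 𝕜 ((1 - C) ^ m).ker := by
  obtain ⟨D, hD, hCD⟩ := hC.exists_one_sub_pow_eq m
  rw [hCD]
  exact hD.finiteDimensional_ker_one_sub

theorem isClosed_range_one_sub_pow (hC : IsCompactOperator C) (m : ℕ) :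
    IsClosed (((1 - C) ^ m).range : Set X) := by
  obtain ⟨D, hD, hCD⟩ := hC.exists_one_sub_pow_eq m
  rw [hCD]
  exact hD.isClosed_range_one_sub

theorem exists_ker_one_sub_pow_succ_eq (hC : IsCompactOperator C) :
    ∃ p, ((1 - C) ^ (p + 1)).ker = ((1 - C) ^ p).ker := by
  set f := 1 - C
  by_contra! hne
  have hlt (p : ℕ) : (f ^ p).ker < (f ^ (p + 1)).ker :=
    (f.iterateKer.monotone p.le_succ).lt_of_ne (hne p).symm
  choose u hu hnorm hfar using fun p ↦ Submodule.exists_mem_norm_eq_one_forall_le_norm_sub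
    (hC.isClosed_ker_one_sub_pow p) (hlt p) (by norm_num : (1 / 2 : ℝ) < 1)
  obtain ⟨p, q, hpq, hclose⟩ :=
    hC.exists_lt_norm_sub_lt (fun n ↦ (hnorm n).le) (by norm_num : (0 : ℝ) < 1 / 2)
  have hmem {a : ℕ} (ha : a ≤ q) {x : X} (hx : x ∈ (f ^ (a + 1)).ker) : f x ∈ (f ^ q).ker := by
    refine f.iterateKer.monotone ha (?_ : f x ∈ (f ^ a).ker)
    rwa [LinearMap.mem_ker, ← Module.End.mul_apply, ← pow_succ]
  refine (le_norm_apply_sub_apply_of_one_sub_mem (hfar q) (f.iterateKer.monotone hpq (hu p))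
    (hmem le_rfl (hu q)) (hmem hpq.le (hu p))).not_gt ?_
  rwa [norm_sub_rev]

theorem exists_range_one_sub_pow_succ_eq (hC : IsCompactOperator C) :
    ∃ p, ((1 - C) ^ (p + 1)).range = ((1 - C) ^ p).range := by
  set f := 1 - C
  by_contra! hne
  have hlt (p : ℕ) : (f ^ (p + 1)).range < (f ^ p).range :=
    (show (f ^ (p + 1)).range ≤ (f ^ p).range from f.iterateRange.monotone p.le_succ).lt_of_ne
      (hne p)
  choose u hu hnorm hfar using fun p ↦ Submodule.exists_mem_norm_eq_one_forall_le_norm_sub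
    (hC.isClosed_range_one_sub_pow (p + 1)) (hlt p) (by norm_num : (1 / 2 : ℝ) < 1)
  obtain ⟨p, q, hpq, hclose⟩ :=
    hC.exists_lt_norm_sub_lt (fun n ↦ (hnorm n).le) (by norm_num : (0 : ℝ) < 1 / 2)
  have hmem {a : ℕ} (ha : p ≤ a) {x : X} (hx : x ∈ (f ^ a).range) :
      f x ∈ (f ^ (p + 1)).range := by
    obtain ⟨y, rfl⟩ := hx
    refine f.iterateRange.monotone (by omega : p + 1 ≤ a + 1) ⟨y, ?_⟩
    rw [pow_succ', Module.End.mul_apply]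
  exact (le_norm_apply_sub_apply_of_one_sub_mem (hfar p) (f.iterateRange.monotone hpq (hu q))
    (hmem le_rfl (hu p)) (hmem hpq.le (hu q))).not_gt hclose

theorem eventually_disjoint_ker_pow_range_pow (hC : IsCompactOperator C) :
    ∀ᶠ m in atTop, Disjoint ((1 - C) ^ m).ker ((1 - C) ^ m).range :=
  have ⟨_, hp⟩ := hC.exists_ker_one_sub_pow_succ_eq
  Module.End.eventually_disjoint_ker_pow_range_pow_of_ker_pow_succ_eq hp

theorem eventually_codisjoint_ker_pow_range_pow (hC : IsCompactOperator C) :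
    ∀ᶠ m in atTop, Codisjoint ((1 - C) ^ m).ker ((1 - C) ^ m).range :=
  have ⟨_, hp⟩ := hC.exists_range_one_sub_pow_succ_eq
  Module.End.eventually_codisjoint_ker_pow_range_pow_of_range_pow_succ_eq hp

end IsCompactOperator

theorem IsCompactOperator.ker_one_sub_pow_le_range {E E' : Type*}
    [NormedAddCommGroup E] [NormedSpace 𝕜 E] [NormedAddCommGroup E'] [NormedSpace 𝕜 E']
    {J : E' →ₗ[𝕜] E} (hJ : DenseRange J) {C : Module.End 𝕜 E} (hC : IsCompactOperator C)
    {C' : Module.End 𝕜 E'} (hC' : IsCompactOperator C') (hCJ : C ∘ₗ J = J ∘ₗ C') (n : ℕ) :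
    ((1 - C) ^ n).ker ≤ J.range := by
  obtain ⟨p, ⟨hdisj, hcodisj⟩, hnp⟩ := ((hC.eventually_disjoint_ker_pow_range_pow.and
    hC'.eventually_codisjoint_ker_pow_range_pow).and (eventually_ge_atTop n)).exists
  set S := (1 - C) ^ p
  set S' := (1 - C') ^ p
  have hSJ : S ∘ₗ J = J ∘ₗ S' := Module.End.commute_pow_left_of_commute
    (by rw [LinearMap.sub_comp, LinearMap.comp_sub, hCJ]; rfl) p
  set W := S'.ker.map J
  have : FiniteDimensional 𝕜 W :=
    have := hC'.finiteDimensional_ker_one_sub_pow p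
    Module.Finite.map _ _
  have hWS : W ≤ S.ker := by
    rintro _ ⟨a, ha, rfl⟩
    rw [LinearMap.mem_ker, ← LinearMap.comp_apply, hSJ, LinearMap.comp_apply, ha, map_zero]
  have htop : S.range ⊔ W = ⊤ := by
    have hJW : J.range ≤ S.range ⊔ W := by
      rw [← Submodule.map_top, ← hcodisj.eq_top, Submodule.map_sup, ← LinearMap.range_comp,
        ← hSJ, sup_comm]
      exact sup_le_sup_right (LinearMap.range_comp_le_range _ _) _
    have hclosed := Submodule.isClosed_sup_finiteDimensional _ W (hC.isClosed_range_one_sub_pow p)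
    exact eq_top_iff.2 fun x _ ↦ hclosed.closure_subset_iff.2 (fun _ hy ↦ hJW hy) (hJ x)
  calc ((1 - C) ^ n).ker ≤ S.ker := (1 - C).iterateKer.monotone hnp
    _ = (W ⊔ S.range) ⊓ S.ker := by rw [sup_comm, htop, top_inf_eq]
    _ = W := by rw [sup_inf_assoc_of_le _ hWS, hdisj.symm.eq_bot, sup_bot_eq]
    _ ≤ J.range := LinearMap.map_le_range

end RieszTheory

theorem generalized_eigenvector_mem_dense_subspace_general
    {E E' : Type*} [NormedAddCommGroup E] [NormedSpace ℂ E]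
    [NormedAddCommGroup E'] [NormedSpace ℂ E']
    (J : E' →L[ℂ] E) (hJdense : DenseRange J)
    (A : E →L[ℂ] E) (hA : IsCompactOperator A)
    (A' : E' →L[ℂ] E') (hA' : IsCompactOperator A')
    (hrestr : A ∘L J = J ∘L A')
    (μ : ℂ) (hμ : μ ≠ 0) (n : ℕ) (x : E)
    (hx : x ∈ LinearMap.ker
      ((((A : E →ₗ[ℂ] E) - μ • LinearMap.id : E →ₗ[ℂ] E) : Module.End ℂ E) ^ n)) :
    x ∈ Set.range J := by
  set C : Module.End ℂ E := μ⁻¹ • (A : E →ₗ[ℂ] E)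
  set C' : Module.End ℂ E' := μ⁻¹ • (A' : E' →ₗ[ℂ] E')
  have hAC : (A : E →ₗ[ℂ] E) - μ • LinearMap.id = (-μ) • (1 - C) := by
    ext y
    simp [C, smul_sub, smul_smul, hμ]
    abel
  have hCJ : C ∘ₗ (J : E' →ₗ[ℂ] E) = (J : E' →ₗ[ℂ] E) ∘ₗ C' := by
    ext y
    simpa [C, C'] using congr(μ⁻¹ • $hrestr y)
  rw [hAC, smul_pow, LinearMap.ker_smul _ _ (pow_ne_zero _ (neg_ne_zero.2 hμ))] at hx
  exact (hA.smul μ⁻¹).ker_one_sub_pow_le_range hJdense (hA'.smul μ⁻¹) hCJ n hx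

theorem generalized_eigenvector_mem_dense_subspace
    {E E' : Type*} [NormedAddCommGroup E] [NormedSpace ℂ E] [CompleteSpace E]
    [NormedAddCommGroup E'] [NormedSpace ℂ E'] [CompleteSpace E']
    (J : E' →L[ℂ] E) (hJinj : Function.Injective J) (hJdense : DenseRange J)
    (A : E →L[ℂ] E) (hA : IsCompactOperator A)
    (A' : E' →L[ℂ] E') (hA' : IsCompactOperator A')
    (hrestr : A ∘L J = J ∘L A')
    (μ : ℂ) (hμ : μ ≠ 0) (n : ℕ) (x : E)
    (hx : x ∈ LinearMap.ker
      ((((A : E →ₗ[ℂ] E) - μ • LinearMap.id : E →ₗ[ℂ] E) : Module.End ℂ E) ^ n)) :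
    x ∈ Set.range J :=
  generalized_eigenvector_mem_dense_subspace_general J hJdense A hA A' hA' hrestr μ hμ n x hx
end

section
/- A cordon sanitaire is never anti-Pareto optimal (finite-dimensional version): let K be a nonnegative N×N matrix, η ∈ [0,1]^N nonzero, and suppose there exist disjoint nonempty sets A, B partitioning the support {i : η_i > 0} with (K·diag(η))_{ij} = 0 for i ∈ B, j ∈ A, and ρ(K·diag(η·1_A)) ≥ ρ(K·diag(η·1_B)). Then for every θ ∈ [0,1], the strategy η_θ = η·1_A + θ·η·1_B satisfies ρ(K·diag(η_θ)) = ρ(K·diag(η)). -/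
/-
No column of `A` feeds a row of `B`, and columns outside `A ∪ B` vanish, so with the indices
ordered as (complement of `B`, `B`) each `K · diag(η_θ)` is block upper triangular and its
characteristic polynomial is the product of those of its two diagonal blocks. All four strategies
in the statement are `η` times a weight that is constant (`α` resp. `β`) on the two blocks, and
homogeneity gives them the spectral radius `max(|α| ρ₀, |β| ρ₁)`, where `ρ₀, ρ₁` are the radii of
the blocks of `K · diag η`. The ordering hypothesis reads `ρ₁ ≤ ρ₀`, and then
`max(ρ₀, θ ρ₁) = ρ₀ = max(ρ₀, ρ₁)`.
-/
open Matrix Polynomial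

namespace Polynomial

noncomputable def maxRootNorm (p : ℂ[X]) : ℝ :=
  sSup {r : ℝ | ∃ z : ℂ, p.IsRoot z ∧ r = ‖z‖}

theorem maxRootNorm_nonneg (p : ℂ[X]) : 0 ≤ p.maxRootNorm :=
  Real.sSup_nonneg fun _ ⟨z, _, hr⟩ => hr ▸ norm_nonneg z

theorem maxRootNorm_le {p : ℂ[X]} {r : ℝ} (h : ∀ z, p.IsRoot z → ‖z‖ ≤ r) (hr : 0 ≤ r) :
    p.maxRootNorm ≤ r :=
  Real.sSup_le (fun _ ⟨z, hz, hs⟩ => hs ▸ h z hz) hr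

theorem norm_le_maxRootNorm {p : ℂ[X]} (hp : p ≠ 0) {z : ℂ} (hz : p.IsRoot z) :
    ‖z‖ ≤ p.maxRootNorm := by
  refine le_csSup ?_ ⟨z, hz, rfl⟩
  refine ((finite_setOfPred_isRoot hp).image (‖·‖)).bddAbove.mono ?_
  rintro _ ⟨w, hw, rfl⟩
  exact ⟨w, hw, rfl⟩

theorem maxRootNorm_mul {p q : ℂ[X]} (hp : p ≠ 0) (hq : q ≠ 0) :
    (p * q).maxRootNorm = max p.maxRootNorm q.maxRootNorm := by
  have hpq := mul_ne_zero hp hq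
  refine le_antisymm (maxRootNorm_le (fun z hz => ?_) (le_max_of_le_left p.maxRootNorm_nonneg))
    (max_le (maxRootNorm_le (fun z hz => ?_) (maxRootNorm_nonneg _))
      (maxRootNorm_le (fun z hz => ?_) (maxRootNorm_nonneg _)))
  · rcases root_mul.mp hz with hz | hz
    · exact le_max_of_le_left (norm_le_maxRootNorm hp hz)
    · exact le_max_of_le_right (norm_le_maxRootNorm hq hz)
  · exact norm_le_maxRootNorm hpq (root_mul.mpr (Or.inl hz))
  · exact norm_le_maxRootNorm hpq (root_mul.mpr (Or.inr hz))

theorem maxRootNorm_X_pow (k : ℕ) : ((X : ℂ[X]) ^ k).maxRootNorm = 0 :=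
  le_antisymm (maxRootNorm_le (fun z hz => by
      rw [eq_zero_of_pow_eq_zero (x := z) (by simpa only [IsRoot.def, eval_pow, eval_X] using hz),
        norm_zero]) le_rfl) (maxRootNorm_nonneg _)

end Polynomial

namespace Matrix

theorem blockTriangular_decide_mem {n R : Type*} [DecidableEq n] [Zero R] {M : Matrix n n R}
    {B : Finset n} (h : ∀ i ∈ B, ∀ j ∉ B, M i j = 0) : M.BlockTriangular fun i => decide (i ∈ B) :=
  fun i j hij => by
    obtain ⟨hj, hi⟩ : j ∉ B ∧ i ∈ B := by simpa [Bool.lt_iff] using hij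
    exact h i hi j hj

variable {n α : Type*} [Fintype n] [DecidableEq n]

theorem BlockTriangular.charpoly_eq_prod_univ {R : Type*} [CommRing R] [DecidableEq α]
    [Fintype α] [LinearOrder α] {M : Matrix n n R} {b : n → α} (h : M.BlockTriangular b) :
    M.charpoly = ∏ a, (M.toSquareBlock b a).charpoly := by
  simp only [Matrix.charpoly, h.charmatrix.det_fintype, charmatrix_toSquareBlock]

theorem toSquareBlock_mul_diagonal_comp {R : Type*} [CommSemiring R] [DecidableEq α]
    (M : Matrix n n R) (b : n → α) (w : α → R) (a : α) :
    (M * diagonal fun i => w (b i)).toSquareBlock b a = w a • M.toSquareBlock b a := by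
  ext i j
  simp [toSquareBlock_def, mul_diagonal, j.2, mul_comm]

theorem isRoot_charpoly_smul_iff {K : Type*} [Field K] {c : K} (hc : c ≠ 0) (M : Matrix n n K)
    (z : K) : (c • M).charpoly.IsRoot (c * z) ↔ M.charpoly.IsRoot z := by
  simp only [← mem_spectrum_iff_isRoot_charpoly]
  exact spectrum.smul_mem_smul_iff (r := Units.mk0 c hc)

open scoped Pointwise in
theorem maxRootNorm_charpoly_smul (c : ℂ) (M : Matrix n n ℂ) :
    (c • M).charpoly.maxRootNorm = ‖c‖ * M.charpoly.maxRootNorm := by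
  rcases eq_or_ne c 0 with rfl | hc
  · simp [maxRootNorm_X_pow]
  have hroots : {r : ℝ | ∃ z : ℂ, (c • M).charpoly.IsRoot z ∧ r = ‖z‖} =
      ‖c‖ • {r : ℝ | ∃ z : ℂ, M.charpoly.IsRoot z ∧ r = ‖z‖} := by
    ext r
    simp only [Set.mem_smul_set, Set.mem_ofPred_eq, smul_eq_mul]
    constructor
    · rintro ⟨z, hz, rfl⟩
      refine ⟨‖z / c‖, ⟨z / c, ?_, rfl⟩, by rw [← norm_mul, mul_div_cancel₀ z hc]⟩
      rwa [← isRoot_charpoly_smul_iff hc, mul_div_cancel₀ z hc]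
    · rintro ⟨_, ⟨z, hz, rfl⟩, rfl⟩
      exact ⟨c * z, (isRoot_charpoly_smul_iff hc M z).mpr hz, (norm_mul c z).symm⟩
  rw [maxRootNorm, hroots, Real.sSup_smul_of_nonneg (norm_nonneg c), smul_eq_mul, maxRootNorm]

theorem BlockTriangular.maxRootNorm_charpoly_mul_diagonal_comp {M : Matrix n n ℂ}
    {b : n → Bool} (hM : M.BlockTriangular b) (w : Bool → ℂ) :
    (M * diagonal fun i => w (b i)).charpoly.maxRootNorm =
      max (‖w false‖ * (M.toSquareBlock b false).charpoly.maxRootNorm)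
        (‖w true‖ * (M.toSquareBlock b true).charpoly.maxRootNorm) := by
  rw [(hM.mul (blockTriangular_diagonal _)).charpoly_eq_prod_univ, Fintype.prod_bool,
    maxRootNorm_mul (charpoly_monic _).ne_zero (charpoly_monic _).ne_zero,
    toSquareBlock_mul_diagonal_comp, toSquareBlock_mul_diagonal_comp,
    maxRootNorm_charpoly_smul, maxRootNorm_charpoly_smul, max_comm]

end Matrix

theorem specRad_mul_diagonal_comp {N : ℕ} {M : Matrix (Fin N) (Fin N) ℝ} {b : Fin N → Bool}
    (hM : M.BlockTriangular b) (w : Bool → ℝ) :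
    specRad (M * diagonal fun i => w (b i)) =
      max (|w false| * ((M.map (algebraMap ℝ ℂ)).toSquareBlock b false).charpoly.maxRootNorm)
        (|w true| * ((M.map (algebraMap ℝ ℂ)).toSquareBlock b true).charpoly.maxRootNorm) := by
  have hmap : (M * diagonal fun i => w (b i)).map (algebraMap ℝ ℂ) =
      M.map (algebraMap ℝ ℂ) * diagonal fun i => (w (b i) : ℂ) := by
    rw [Matrix.map_mul, diagonal_map (map_zero _)]
    rfl
  rw [specRad, ← maxRootNorm, hmap,
    (hM.map (algebraMap ℝ ℂ)).maxRootNorm_charpoly_mul_diagonal_comp fun k => (w k : ℂ),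
    Complex.norm_real, Complex.norm_real, Real.norm_eq_abs, Real.norm_eq_abs]

theorem cordon_sanitaire_constant_loss_general {N : ℕ} (K : Matrix (Fin N) (Fin N) ℝ)
    (η : Fin N → ℝ) (hη : ∀ i, 0 ≤ η i ∧ η i ≤ 1)
    (A B : Finset (Fin N))
    (hAB : Disjoint A B) (hsupp : ∀ i, 0 < η i ↔ i ∈ A ∪ B)
    (hcut : ∀ i ∈ B, ∀ j ∈ A, K i j * η j = 0)
    (hord : specRad (K * Matrix.diagonal (fun i => if i ∈ B then η i else 0)) ≤
      specRad (K * Matrix.diagonal (fun i => if i ∈ A then η i else 0)))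
    (θ : ℝ) (hθ : θ ∈ Set.Icc (0 : ℝ) 1) :
    specRad (K * Matrix.diagonal
        (fun i => if i ∈ A then η i else if i ∈ B then θ * η i else 0)) =
      specRad (K * Matrix.diagonal η) := by
  have hcases : ∀ i, (i ∈ A ∧ i ∉ B) ∨ (i ∉ A ∧ i ∈ B) ∨ (i ∉ A ∧ i ∉ B ∧ η i = 0) := fun i => by
    by_cases hiA : i ∈ A
    · exact Or.inl ⟨hiA, Finset.disjoint_left.mp hAB hiA⟩
    by_cases hiB : i ∈ B
    · exact Or.inr (Or.inl ⟨hiA, hiB⟩)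
    refine Or.inr (Or.inr ⟨hiA, hiB, le_antisymm (not_lt.mp fun hpos => ?_) (hη i).1⟩)
    simpa [hiA, hiB] using (hsupp i).mp hpos
  set b : Fin N → Bool := fun i => decide (i ∈ B)
  have hM : (K * diagonal η).BlockTriangular b := blockTriangular_decide_mem fun i hi j hj => by
    rw [mul_diagonal]
    rcases hcases j with ⟨hjA, -⟩ | ⟨-, hjB⟩ | ⟨-, -, hη0⟩
    exacts [hcut i hi j hjA, absurd hjB hj, by rw [hη0, mul_zero]]
  set ρ₀ := (((K * diagonal η).map (algebraMap ℝ ℂ)).toSquareBlock b false).charpoly.maxRootNorm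
  set ρ₁ := (((K * diagonal η).map (algebraMap ℝ ℂ)).toSquareBlock b true).charpoly.maxRootNorm
  have hrad : ∀ (w : Bool → ℝ) (d : Fin N → ℝ), (∀ i, d i = η i * w (b i)) →
      specRad (K * diagonal d) = max (|w false| * ρ₀) (|w true| * ρ₁) := fun w d hd => by
    rw [funext hd, ← diagonal_mul_diagonal, ← Matrix.mul_assoc]
    exact specRad_mul_diagonal_comp hM w
  rw [hrad (fun k => if k then 1 else 0) _ ?_, hrad (fun k => if k then 0 else 1) _ ?_] at hord
  rw [hrad (fun k => if k then θ else 1) _ ?_, hrad (fun _ => 1) η fun i => (mul_one _).symm]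
  · have hρ₀ : 0 ≤ ρ₀ := maxRootNorm_nonneg _
    have hρ₁ : 0 ≤ ρ₁ := maxRootNorm_nonneg _
    simp only [abs_one, abs_zero, abs_of_nonneg hθ.1, Bool.false_eq_true, if_true, if_false,
      one_mul, zero_mul, max_eq_left hρ₀, max_eq_right hρ₁] at hord ⊢
    rw [max_eq_left hord, max_eq_left ((mul_le_of_le_one_left hρ₁ hθ.2).trans hord)]
  all_goals intro i; rcases hcases i with h | h | h <;> simp [b, h, mul_comm]

theorem cordon_sanitaire_constant_loss {N : ℕ} (K : Matrix (Fin N) (Fin N) ℝ)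
    (hK : ∀ i j, 0 ≤ K i j) (η : Fin N → ℝ) (hη : ∀ i, 0 ≤ η i ∧ η i ≤ 1)
    (hηne : η ≠ 0) (A B : Finset (Fin N)) (hA : A.Nonempty) (hB : B.Nonempty)
    (hAB : Disjoint A B) (hsupp : ∀ i, 0 < η i ↔ i ∈ A ∪ B)
    (hcut : ∀ i ∈ B, ∀ j ∈ A, K i j * η j = 0)
    (hord : specRad (K * Matrix.diagonal (fun i => if i ∈ B then η i else 0)) ≤
      specRad (K * Matrix.diagonal (fun i => if i ∈ A then η i else 0)))
    (θ : ℝ) (hθ : θ ∈ Set.Icc (0 : ℝ) 1) :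
    specRad (K * Matrix.diagonal
        (fun i => if i ∈ A then η i else if i ∈ B then θ * η i else 0)) =
      specRad (K * Matrix.diagonal η) :=
  cordon_sanitaire_constant_loss_general K η hη A B hAB hsupp hcut hord θ hθ
end

section
/- Existence of a maximal independent set for a bounded kernel: let k : Ω×Ω → ℝ≥0 be a bounded measurable kernel on a probability space (Ω,μ). Define α(k) = sup{μ(A) : A measurable, k = 0 μ⊗μ-a.e. on A×A}. Then the supremum is attained: there exists a measurable set A with k = 0 a.e. on A×A and μ(A) = α(k). -/
/-!
Take independent sets `Aₙ` with `μ Aₙ → α`. Along an ultrafilter, the measures `μ|Aₙ` converge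
setwise to a measure `ν ≤ μ` with `ν univ = α`: the limit is countably additive because all the
`μ|Aₙ` are dominated by the finite measure `μ`. The products `μ|Aₙ ⊗ μ|Aₙ` then converge setwise
to `ν ⊗ ν`, since their limit agrees with `ν ⊗ ν` on rectangles. Hence `ν ⊗ ν` does not charge
the set where `k ≠ 0`, and the set where `dν/dμ ≠ 0` is an independent set of measure at least `α`.
-/

open MeasureTheory Filter Set Topology
open scoped ENNReal Function

theorem ENNReal.tendsto_tsum_of_dominated_convergence {ι β : Type*} {l : Filter ι}
    {f : ι → β → ℝ≥0∞} {g : β → ℝ≥0∞} {bound : β → ℝ≥0∞} (h_sum : ∑' j, bound j ≠ ∞)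
    (hfg : ∀ j, Tendsto (f · j) l (𝓝 (g j))) (h_bound : ∀ i j, f i j ≤ bound j) :
    Tendsto (fun i => ∑' j, f i j) l (𝓝 (∑' j, g j)) := by
  rcases l.eq_or_neBot with rfl | _
  · exact tendsto_bot
  have hbound : ∀ j, bound j ≠ ∞ := ENNReal.ne_top_of_tsum_ne_top h_sum
  have hg_le : ∀ j, g j ≤ bound j := fun j => le_of_tendsto' (hfg j) (h_bound · j)
  have hf_ne_top : ∀ i j, f i j ≠ ∞ := fun i j => ne_top_of_le_ne_top (hbound j) (h_bound i j)
  have hg_ne_top : ∀ j, g j ≠ ∞ := fun j => ne_top_of_le_ne_top (hbound j) (hg_le j)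
  rw [← ENNReal.tendsto_toReal_iff
    (fun i => ne_top_of_le_ne_top h_sum (ENNReal.tsum_le_tsum (h_bound i)))
    (ne_top_of_le_ne_top h_sum (ENNReal.tsum_le_tsum hg_le))]
  simp_rw [ENNReal.tsum_toReal_eq (hf_ne_top _), ENNReal.tsum_toReal_eq hg_ne_top]
  refine _root_.tendsto_tsum_of_dominated_convergence (ENNReal.summable_toReal h_sum)
    (fun j => (ENNReal.tendsto_toReal (hg_ne_top j)).comp (hfg j))
    (Eventually.of_forall fun i j => ?_)
  rw [Real.norm_eq_abs, abs_of_nonneg ENNReal.toReal_nonneg]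
  exact ENNReal.toReal_mono (hbound j) (h_bound i j)

namespace MeasureTheory.Measure

variable {α β ι : Type*} [MeasurableSpace α] [MeasurableSpace β]

theorem exists_le_tendsto_ultrafilter (ρ : Measure α) [IsFiniteMeasure ρ] (U : Ultrafilter ι)
    (π : ι → Measure α) (hπ : ∀ i, π i ≤ ρ) :
    ∃ ν ≤ ρ, ∀ s, MeasurableSet s → Tendsto (fun i => π i s) U (𝓝 (ν s)) := by
  set m : Set α → ℝ≥0∞ := fun s => (U.map fun i => π i s).lim
  have hm : ∀ s, Tendsto (fun i => π i s) U (𝓝 (m s)) := fun s => (U.map _).le_nhds_lim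
  have hm_iUnion : ∀ ⦃f : ℕ → Set α⦄, (∀ j, MeasurableSet (f j)) → Pairwise (Disjoint on f) →
      m (⋃ j, f j) = ∑' j, m (f j) := by
    intro f hf hd
    refine tendsto_nhds_unique (hm _) ?_
    simp_rw [measure_iUnion hd hf]
    exact ENNReal.tendsto_tsum_of_dominated_convergence
      (measure_iUnion hd hf ▸ measure_ne_top ρ _) (fun j => hm (f j)) (fun i j => hπ i (f j))
  refine ⟨ofMeasurable (fun s _ => m s) (tendsto_nhds_unique (hm ∅) (by simp)) hm_iUnion,
    le_iff.2 fun s hs => ?_, fun s hs => by rw [ofMeasurable_apply _ hs]; exact hm s⟩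
  rw [ofMeasurable_apply _ hs]
  exact le_of_tendsto' (hm s) fun i => hπ i s

theorem tendsto_prod_apply {l : Filter ι} {ρ : Measure α} {ρ' : Measure β} [IsFiniteMeasure ρ]
    [IsFiniteMeasure ρ'] {π : ι → Measure α} {π' : ι → Measure β} (hπ : ∀ i, π i ≤ ρ)
    (hπ' : ∀ i, π' i ≤ ρ') {ν : Measure α} {ν' : Measure β} [IsFiniteMeasure ν]
    [IsFiniteMeasure ν'] (hν : ∀ s, MeasurableSet s → Tendsto (fun i => π i s) l (𝓝 (ν s)))
    (hν' : ∀ s, MeasurableSet s → Tendsto (fun i => π' i s) l (𝓝 (ν' s)))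
    {s : Set (α × β)} (hs : MeasurableSet s) :
    Tendsto (fun i => (π i).prod (π' i) s) l (𝓝 (ν.prod ν' s)) := by
  have := fun i => isFiniteMeasure_of_le ρ (hπ i)
  have := fun i => isFiniteMeasure_of_le ρ' (hπ' i)
  refine (tendsto_iff_ultrafilter _ _ _).2 fun U hU => ?_
  obtain ⟨κ, -, hκ⟩ := exists_le_tendsto_ultrafilter (ρ.prod ρ') U (fun i => (π i).prod (π' i))
    fun i => prod_mono (hπ i) (hπ' i)
  suffices ν.prod ν' = κ from this ▸ hκ s hs
  refine prod_eq fun t t' ht ht' => tendsto_nhds_unique (hκ _ (ht.prod ht')) ?_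
  simp_rw [prod_prod]
  exact ENNReal.Tendsto.mul ((hν t ht).mono_left hU) (.inr (measure_ne_top _ _))
    ((hν' t' ht').mono_left hU) (.inr (measure_ne_top _ _))

theorem AbsolutelyContinuous.exists_restrict_absolutelyContinuous {μ ν : Measure α}
    [SigmaFinite μ] [SigmaFinite ν] (h : ν ≪ μ) :
    ∃ A, MeasurableSet A ∧ ν Aᶜ = 0 ∧ μ.restrict A ≪ ν := by
  have hA : MeasurableSet {x | ν.rnDeriv μ x ≠ 0} :=
    (measurable_rnDeriv ν μ (measurableSet_singleton 0)).compl
  refine ⟨_, hA, ae_iff.1 ((rnDeriv_pos h).mono fun x hx => hx.ne'), fun s hs => ?_⟩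
  rw [measure_eq_zero_iff_ae_notMem] at hs ⊢
  rw [ae_restrict_iff' hA]
  exact ae_rnDeriv_ne_zero_imp_of_ae μ hs

end MeasureTheory.Measure

section IndependentSet

open Measure

variable {Ω : Type*} [MeasurableSpace Ω]

/-- `N` stands for the support `{k ≠ 0}` of the kernel. -/
def IsIndependentSet (μ : Measure Ω) (N : Set (Ω × Ω)) (A : Set Ω) : Prop :=
  MeasurableSet A ∧ μ.prod μ (N ∩ A ×ˢ A) = 0

theorem exists_isIndependentSet_forall_le (μ : Measure Ω) [IsFiniteMeasure μ]
    {N : Set (Ω × Ω)} (hN : MeasurableSet N) :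
    ∃ A, IsIndependentSet μ N A ∧ ∀ B, IsIndependentSet μ N B → μ B ≤ μ A := by
  obtain ⟨_, -, hlim, hmem⟩ := exists_seq_tendsto_sSup (S := μ '' {B | IsIndependentSet μ N B})
    ⟨_, ∅, ⟨.empty, by simp⟩, rfl⟩ (OrderTop.bddAbove _)
  choose A hA hμA using hmem
  let U := Ultrafilter.of (atTop : Filter ℕ)
  obtain ⟨ν, hνμ, hν⟩ := exists_le_tendsto_ultrafilter μ U (fun n => μ.restrict (A n))
    fun n => restrict_le_self
  have := isFiniteMeasure_of_le μ hνμ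
  have hν_univ : ν univ = sSup (μ '' {B | IsIndependentSet μ N B}) :=
    tendsto_nhds_unique (hν univ .univ) (by simpa [hμA] using hlim.mono_left (Ultrafilter.of_le _))
  have hνN : ν.prod ν N = 0 := by
    refine tendsto_nhds_unique (tendsto_prod_apply (fun n => restrict_le_self)
      (fun n => restrict_le_self) hν hν hN) ?_
    simp_rw [prod_restrict, restrict_apply hN, (hA _).2]
    exact tendsto_const_nhds
  obtain ⟨A₀, hA₀, hνA₀, hμν⟩ :=
    (absolutelyContinuous_of_le hνμ).exists_restrict_absolutelyContinuous
  refine ⟨A₀, ⟨hA₀, ?_⟩, fun B hB => ?_⟩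
  · rw [← restrict_apply hN, ← prod_restrict]
    exact hμν.prod hμν hνN
  · calc μ B ≤ ν univ := hν_univ ▸ le_sSup ⟨B, hB, rfl⟩
      _ = ν A₀ := (measure_congr (ae_eq_univ.2 hνA₀)).symm
      _ ≤ μ A₀ := hνμ A₀

end IndependentSet

theorem exists_maximal_independent_set_general {Ω : Type*} [MeasurableSpace Ω]
    (μ : Measure Ω) [IsProbabilityMeasure μ] (k : Ω → Ω → ℝ)
    (hk : Measurable (Function.uncurry k)) :
    ∃ A : Set Ω, MeasurableSet A ∧
      (∀ᵐ p ∂(μ.prod μ), p.1 ∈ A → p.2 ∈ A → k p.1 p.2 = 0) ∧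
      μ A = sSup {r : ENNReal | ∃ B : Set Ω, MeasurableSet B ∧
        (∀ᵐ p ∂(μ.prod μ), p.1 ∈ B → p.2 ∈ B → k p.1 p.2 = 0) ∧ r = μ B} := by
  set N : Set (Ω × Ω) := {p | k p.1 p.2 ≠ 0}
  have hindep : ∀ B, (∀ᵐ p ∂(μ.prod μ), p.1 ∈ B → p.2 ∈ B → k p.1 p.2 = 0) ↔
      μ.prod μ (N ∩ B ×ˢ B) = 0 := fun B => by
    rw [ae_iff]
    congr! 2
    ext p
    simp only [N, mem_ofPred_eq, mem_inter_iff, mem_prod, Classical.not_imp]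
    tauto
  obtain ⟨A, ⟨hA, hAN⟩, hmax⟩ :=
    exists_isIndependentSet_forall_le μ (hk (measurableSet_singleton 0)).compl
  refine ⟨A, hA, (hindep A).2 hAN,
    le_antisymm (le_sSup ⟨A, hA, (hindep A).2 hAN, rfl⟩) (sSup_le ?_)⟩
  rintro _ ⟨B, hB, hBN, rfl⟩
  exact hmax B ⟨hB, (hindep B).1 hBN⟩

theorem exists_maximal_independent_set {Ω : Type*} [MeasurableSpace Ω]
    (μ : Measure Ω) [IsProbabilityMeasure μ] (k : Ω → Ω → ℝ)
    (hk : Measurable (Function.uncurry k)) (hknn : ∀ x y, 0 ≤ k x y)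
    (hbd : ∃ C : ℝ, ∀ x y, k x y ≤ C) :
    ∃ A : Set Ω, MeasurableSet A ∧
      (∀ᵐ p ∂(μ.prod μ), p.1 ∈ A → p.2 ∈ A → k p.1 p.2 = 0) ∧
      μ A = sSup {r : ENNReal | ∃ B : Set Ω, MeasurableSet B ∧
        (∀ᵐ p ∂(μ.prod μ), p.1 ∈ B → p.2 ∈ B → k p.1 p.2 = 0) ∧ r = μ B} :=
  exists_maximal_independent_set_general μ k hk
end

section
/- Conversely, for a symmetric nonnegative matrix, zero effective reproduction number forces an independent support: let K be a symmetric N×N matrix with nonnegative entries and η ∈ [0,1]^N with ρ(K·diag(η)) = 0. Then K_{ij} = 0 for all i, j in the support {i : η_i > 0}; consequently with the uniform cost C(η) = 1 − (1/N)Σ η_i, one has C(η) ≥ 1 − α(K), where α(K) is the maximal proportion |A|/N over subsets A with K zero on A×A. -/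
open Matrix Polynomial

open Finset

/-! If `ρ(K · diag η) = 0`, every complex eigenvalue of `K · diag η` vanishes, so by
Cayley–Hamilton the matrix is nilpotent and the trace of its square,
`∑ i j, K i j ^ 2 * η i * η j` (by symmetry of `K`), is zero. As `η ≥ 0` every term vanishes,
which kills `K` on the support of `η`. That support is thus an independent set, and since
`η ≤ 1` its size bounds `∑ i, η i`. -/

theorem Polynomial.Monic.eq_X_pow_of_isRoot_eq_zero {K : Type*} [Field K] [IsAlgClosed K]
    {p : K[X]} (hp : p.Monic) (h : ∀ z, p.IsRoot z → z = 0) : p = X ^ p.natDegree := by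
  have hsplit : p.Splits := IsAlgClosed.splits p
  have hroots : p.roots = Multiset.replicate p.natDegree 0 :=
    Multiset.eq_replicate.mpr ⟨splits_iff_card_roots.mp hsplit,
      fun z hz => h z (isRoot_of_mem_roots hz)⟩
  rw [hsplit.eq_prod_roots_of_monic hp, hroots]
  simp

theorem Matrix.isNilpotent_of_isRoot_charpoly_eq_zero {n K : Type*} [Fintype n] [DecidableEq n]
    [Field K] [IsAlgClosed K] {M : Matrix n n K} (h : ∀ z, M.charpoly.IsRoot z → z = 0) :
    IsNilpotent M := by
  refine ⟨Fintype.card n, ?_⟩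
  have hcp : M.charpoly = X ^ Fintype.card n := by
    rw [M.charpoly_monic.eq_X_pow_of_isRoot_eq_zero h, M.charpoly_natDegree_eq_dim]
  simpa [hcp] using M.aeval_self_charpoly

theorem isRoot_eq_zero_of_specRad_eq_zero {N : ℕ} {M : Matrix (Fin N) (Fin N) ℝ}
    (h : specRad M = 0) {z : ℂ} (hz : (M.map (algebraMap ℝ ℂ)).charpoly.IsRoot z) :
    z = 0 := by
  have hfin :
      {r : ℝ | ∃ z : ℂ, (M.map (algebraMap ℝ ℂ)).charpoly.IsRoot z ∧ r = ‖z‖}.Finite :=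
    ((finite_setOfPred_isRoot (charpoly_monic _).ne_zero).image (‖·‖)).subset
      (by rintro _ ⟨z, hz, rfl⟩; exact ⟨z, hz, rfl⟩)
  have : ‖z‖ ≤ specRad M := le_csSup hfin.bddAbove ⟨z, hz, rfl⟩
  exact norm_le_zero_iff.mp (h ▸ this)

theorem isNilpotent_of_specRad_eq_zero {N : ℕ} {M : Matrix (Fin N) (Fin N) ℝ}
    (h : specRad M = 0) : IsNilpotent M :=
  (IsNilpotent.map_iff (f := (algebraMap ℝ ℂ).mapMatrix)
    (Matrix.map_injective (algebraMap ℝ ℂ).injective)).mp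
    (Matrix.isNilpotent_of_isRoot_charpoly_eq_zero fun _ => isRoot_eq_zero_of_specRad_eq_zero h)

theorem Matrix.IsSymm.trace_mul_diagonal_mul_self {n R : Type*} [Fintype n] [DecidableEq n]
    [CommSemiring R] {K : Matrix n n R} (hK : K.IsSymm) (η : n → R) :
    trace ((K * diagonal η) ^ 2) = ∑ i, ∑ j, K i j ^ 2 * (η i * η j) := by
  simp only [trace, diag, sq, mul_apply (M := K * diagonal η), mul_diagonal]
  refine sum_congr rfl fun i _ => sum_congr rfl fun j _ => ?_
  rw [hK.apply i j]
  ring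

theorem Matrix.IsSymm.apply_eq_zero_of_isNilpotent_mul_diagonal {n R : Type*} [Fintype n]
    [DecidableEq n] [CommRing R] [LinearOrder R] [IsStrictOrderedRing R]
    {K : Matrix n n R} (hK : K.IsSymm) {η : n → R} (hη : ∀ i, 0 ≤ η i)
    (hnil : IsNilpotent (K * diagonal η)) {i j : n} (hi : 0 < η i) (hj : 0 < η j) :
    K i j = 0 := by
  have htrace : ∑ i, ∑ j, K i j ^ 2 * (η i * η j) = 0 := by
    rw [← hK.trace_mul_diagonal_mul_self]
    exact (isNilpotent_trace_of_isNilpotent (hnil.pow_of_pos two_ne_zero)).eq_zero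
  have hterm : ∀ i j, 0 ≤ K i j ^ 2 * (η i * η j) := fun i j =>
    mul_nonneg (sq_nonneg _) (mul_nonneg (hη i) (hη j))
  have hrow := (sum_eq_zero_iff_of_nonneg fun i _ => sum_nonneg fun j _ => hterm i j).mp htrace
  have hij := (sum_eq_zero_iff_of_nonneg fun j _ => hterm i j).mp (hrow i (mem_univ i)) j
    (mem_univ j)
  simpa [hi.ne', hj.ne'] using hij

theorem sum_le_card_filter_pos {ι R : Type*} [Fintype ι] [Semiring R] [LinearOrder R]
    [IsOrderedRing R] {η : ι → R} (hη : ∀ i, η i ≤ 1) :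
    ∑ i, η i ≤ #{i | 0 < η i} := by
  rw [← sum_boole]
  exact sum_le_sum fun i _ => by split_ifs with h <;> [exact hη i; exact not_lt.mp h]

theorem zero_specRad_implies_independent_support_general {N : ℕ}
    (K : Matrix (Fin N) (Fin N) ℝ) (hsym : K.IsSymm)
    (η : Fin N → ℝ) (hη : ∀ i, 0 ≤ η i ∧ η i ≤ 1)
    (hzero : specRad (K * Matrix.diagonal η) = 0) :
    (∀ i j, 0 < η i → 0 < η j → K i j = 0) ∧
      1 - (∑ i, η i) / N ≥
        1 - sSup {r : ℝ | ∃ A : Finset (Fin N),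
          (∀ i ∈ A, ∀ j ∈ A, K i j = 0) ∧ r = (A.card : ℝ) / N} := by
  have hsupport : ∀ i j, 0 < η i → 0 < η j → K i j = 0 := fun i j =>
    hsym.apply_eq_zero_of_isNilpotent_mul_diagonal (fun i => (hη i).1)
      (isNilpotent_of_specRad_eq_zero hzero)
  refine ⟨hsupport, ?_⟩
  set S :=
    {r : ℝ | ∃ A : Finset (Fin N), (∀ i ∈ A, ∀ j ∈ A, K i j = 0) ∧ r = (A.card : ℝ) / N}
  have hS : BddAbove S := ((Set.finite_range fun A : Finset (Fin N) => (#A : ℝ) / N).subset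
    (by rintro _ ⟨A, -, rfl⟩; exact ⟨A, rfl⟩)).bddAbove
  have hA : (#{i | 0 < η i} : ℝ) / N ≤ sSup S := le_csSup hS
    ⟨_, fun i hi j hj => hsupport i j (mem_filter.mp hi).2 (mem_filter.mp hj).2, rfl⟩
  have hsum : (∑ i, η i) / N ≤ (#{i | 0 < η i} : ℝ) / N :=
    div_le_div_of_nonneg_right (sum_le_card_filter_pos fun i => (hη i).2) N.cast_nonneg
  linarith

theorem zero_specRad_implies_independent_support {N : ℕ} (hN : 0 < N)
    (K : Matrix (Fin N) (Fin N) ℝ) (hK : ∀ i j, 0 ≤ K i j) (hsym : K.IsSymm)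
    (η : Fin N → ℝ) (hη : ∀ i, 0 ≤ η i ∧ η i ≤ 1)
    (hzero : specRad (K * Matrix.diagonal η) = 0) :
    (∀ i j, 0 < η i → 0 < η j → K i j = 0) ∧
      1 - (∑ i, η i) / N ≥
        1 - sSup {r : ℝ | ∃ A : Finset (Fin N),
          (∀ i ∈ A, ∀ j ∈ A, K i j = 0) ∧ r = (A.card : ℝ) / N} :=
  zero_specRad_implies_independent_support_general K hsym η hη hzero
end

section
/- Optimal ray property: let C : [0,1]^N → ℝ be affine and decreasing, and L : [0,1]^N → ℝ≥0 convex and positively homogeneous (L(λη) = λL(η) for λ ∈ [0,1]). Suppose η⋆ ∈ [0,1]^N is Pareto optimal (i.e., no η with L(η) ≤ L(η⋆) and C(η) < C(η⋆), nor with C(η) ≤ C(η⋆) and L(η) < L(η⋆)) and max_i η⋆_i < 1. Then for every λ ∈ [0, 1/max_i η⋆_i] with λη⋆ ∈ [0,1]^N, the strategy λη⋆ is also Pareto optimal. -/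
/-!
Since `max ηs < 1`, the ray `{l • ηs}` extends inside `[0,1]^N` beyond `ηs`, so for every admissible
`l` the point `ηs` is a convex combination `t • (l • ηs) + (1 - t) • (μ • ηs)` with `t > 0` and `μ • ηs`
on the ray. `C` is affine and, by homogeneity, `L` is linear along the ray, so both objectives at `ηs`
are the same convex combination of their values at the two ends. A strategy `η'` improving on
`l • ηs` would then make `t • η' + (1 - t) • (μ • ηs)` improve on `ηs`, because `C` is affine and `L`
convex.
-/

/-- `η` is Pareto optimal on `Δ = [0,1]^N` for the cost `C` and the loss `L`:
no admissible strategy does at least as well on one objective and strictly better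
on the other. -/
def ParetoOptimal {N : ℕ} (C L : (Fin N → ℝ) → ℝ) (η : Fin N → ℝ) : Prop :=
  η ∈ Set.Icc (0 : Fin N → ℝ) 1 ∧
    ∀ η' ∈ Set.Icc (0 : Fin N → ℝ) 1,
      (L η' ≤ L η → C η ≤ C η') ∧ (C η' ≤ C η → L η ≤ L η')

open Set

lemma apply_smul_of_homogeneous {E : Type*} [AddCommGroup E] [Module ℝ E] {s : Set E}
    {L : E → ℝ} (hL : ∀ a ∈ Icc (0 : ℝ) 1, ∀ x ∈ s, L (a • x) = a * L x)
    {x : E} (hx : x ∈ s) {l : ℝ} (hl : 0 ≤ l) (hlx : l • x ∈ s) :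
    L (l • x) = l * L x := by
  rcases le_or_gt l 1 with hl1 | hl1
  · exact hL l ⟨hl, hl1⟩ x hx
  · have hl0 : l ≠ 0 := by positivity
    have h := hL l⁻¹ ⟨by positivity, inv_le_one_of_one_le₀ hl1.le⟩ (l • x) hlx
    rw [inv_smul_smul₀ hl0] at h
    rw [h, mul_inv_cancel_left₀ hl0]

lemma smul_mem_Icc_zero_one {ι : Type*} {η : ι → ℝ} {m l : ℝ} (hη : 0 ≤ η)
    (hηm : ∀ i, η i ≤ m) (hm : 0 < m) (hl : 0 ≤ l) (hlm : l ≤ 1 / m) :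
    l • η ∈ Icc (0 : ι → ℝ) 1 := by
  refine ⟨smul_nonneg hl hη, fun i => ?_⟩
  calc l * η i ≤ 1 / m * m := mul_le_mul hlm (hηm i) (hη i) (by positivity)
    _ = 1 := one_div_mul_cancel hm.ne'

lemma exists_combination_eq_one (l : ℝ) {M : ℝ} (hM : 1 < M) :
    ∃ t ∈ Ioc (0 : ℝ) 1, ∃ μ ∈ Icc 0 M, t * l + (1 - t) * μ = 1 := by
  rcases le_or_gt l 1 with hl1 | hl1
  · have hMl : 0 < M - l := by linarith
    refine ⟨(M - 1) / (M - l), ⟨by apply div_pos <;> linarith, ?_⟩, M, ⟨by linarith, le_rfl⟩, ?_⟩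
    · rw [div_le_one hMl]; linarith
    · field_simp; ring
  · have hl0 : 0 < l := by linarith
    refine ⟨1 / l, ⟨by positivity, by rw [div_le_one hl0]; exact hl1.le⟩, 0,
      ⟨le_rfl, by linarith⟩, ?_⟩
    field_simp; ring

namespace ParetoOptimal

variable {N : ℕ} {C L : (Fin N → ℝ) → ℝ}

lemma of_smul_add_smul_eq
    (hCaff : ∀ η₁ η₂ : Fin N → ℝ, ∀ t : ℝ,
      C (t • η₁ + (1 - t) • η₂) = t * C η₁ + (1 - t) * C η₂)
    (hLcvx : ConvexOn ℝ (Icc (0 : Fin N → ℝ) 1) L)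
    {x y z : Fin N → ℝ} {t : ℝ} (hx : ParetoOptimal C L x)
    (hy : y ∈ Icc (0 : Fin N → ℝ) 1) (hz : z ∈ Icc (0 : Fin N → ℝ) 1)
    (ht : t ∈ Ioc (0 : ℝ) 1) (hxyz : t • y + (1 - t) • z = x)
    (hLx : L x = t * L y + (1 - t) * L z) :
    ParetoOptimal C L y := by
  obtain ⟨ht0, ht1⟩ := ht
  refine ⟨hy, fun η' hη' => ?_⟩
  have hw : t • η' + (1 - t) • z ∈ Icc (0 : Fin N → ℝ) 1 :=
    convex_Icc (0 : Fin N → ℝ) 1 hη' hz ht0.le (by linarith) (by ring)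
  have hCw := hCaff η' z t
  have hCx : C x = t * C y + (1 - t) * C z := by rw [← hxyz, hCaff]
  have hLw : L (t • η' + (1 - t) • z) ≤ t * L η' + (1 - t) * L z :=
    hLcvx.2 hη' hz ht0.le (by linarith) (by ring)
  constructor
  · intro hL
    have hLwx : L (t • η' + (1 - t) • z) ≤ L x := by
      nlinarith [mul_le_mul_of_nonneg_left hL ht0.le]
    have hCxw := (hx.2 _ hw).1 hLwx
    rw [hCw, hCx] at hCxw
    nlinarith
  · intro hC
    have hCwx : C (t • η' + (1 - t) • z) ≤ C x := by
      rw [hCw, hCx]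
      nlinarith [mul_le_mul_of_nonneg_left hC ht0.le]
    have hLxw := (hx.2 _ hw).2 hCwx
    nlinarith

end ParetoOptimal

theorem optimal_ray_general {N : ℕ} (C L : (Fin N → ℝ) → ℝ)
    (hCaff : ∀ η₁ η₂ : Fin N → ℝ, ∀ t : ℝ,
      C (t • η₁ + (1 - t) • η₂) = t * C η₁ + (1 - t) * C η₂)
    (hLcvx : ConvexOn ℝ (Set.Icc (0 : Fin N → ℝ) 1) L)
    (hLhom : ∀ l : ℝ, l ∈ Set.Icc (0 : ℝ) 1 →
      ∀ η ∈ Set.Icc (0 : Fin N → ℝ) 1, L (l • η) = l * L η)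
    (ηs : Fin N → ℝ) (hηs : ParetoOptimal C L ηs)
    (m : ℝ) (hm : IsGreatest (Set.range ηs) m) (hm0 : 0 < m) (hm1 : m < 1) :
    ∀ l : ℝ, 0 ≤ l → l ≤ 1 / m → ParetoOptimal C L (l • ηs) := by
  intro l hl hlm
  have hray : ∀ a, 0 ≤ a → a ≤ 1 / m → a • ηs ∈ Icc (0 : Fin N → ℝ) 1 := fun a ha ham =>
    smul_mem_Icc_zero_one hηs.1.1 (fun i => hm.2 ⟨i, rfl⟩) hm0 ha ham
  have hLray : ∀ a, 0 ≤ a → a ≤ 1 / m → L (a • ηs) = a * L ηs := fun a ha ham =>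
    apply_smul_of_homogeneous hLhom hηs.1 ha (hray a ha ham)
  obtain ⟨t, ht, μ, ⟨hμ0, hμm⟩, hsum⟩ :=
    exists_combination_eq_one l ((one_lt_div hm0).2 hm1)
  refine hηs.of_smul_add_smul_eq hCaff hLcvx (hray l hl hlm) (hray μ hμ0 hμm) ht ?_ ?_
  · rw [smul_smul, smul_smul, ← add_smul, hsum, one_smul]
  · rw [hLray l hl hlm, hLray μ hμ0 hμm]
    linear_combination (-L ηs) * hsum

theorem optimal_ray {N : ℕ} (hN : 0 < N) (C L : (Fin N → ℝ) → ℝ)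
    (hCaff : ∀ η₁ η₂ : Fin N → ℝ, ∀ t : ℝ,
      C (t • η₁ + (1 - t) • η₂) = t * C η₁ + (1 - t) * C η₂)
    (hCdec : ∀ η₁ η₂ : Fin N → ℝ, η₁ ∈ Set.Icc (0 : Fin N → ℝ) 1 →
      η₂ ∈ Set.Icc (0 : Fin N → ℝ) 1 → η₁ ≤ η₂ → (∑ i, η₁ i) < ∑ i, η₂ i →
      C η₂ < C η₁)
    (hLnn : ∀ η, 0 ≤ L η)
    (hLcvx : ConvexOn ℝ (Set.Icc (0 : Fin N → ℝ) 1) L)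
    (hLmono : ∀ η₁ η₂ : Fin N → ℝ, η₁ ∈ Set.Icc (0 : Fin N → ℝ) 1 →
      η₂ ∈ Set.Icc (0 : Fin N → ℝ) 1 → η₁ ≤ η₂ → L η₁ ≤ L η₂)
    (hLhom : ∀ l : ℝ, l ∈ Set.Icc (0 : ℝ) 1 →
      ∀ η ∈ Set.Icc (0 : Fin N → ℝ) 1, L (l • η) = l * L η)
    (ηs : Fin N → ℝ) (hηs : ParetoOptimal C L ηs)
    (m : ℝ) (hm : IsGreatest (Set.range ηs) m) (hm0 : 0 < m) (hm1 : m < 1) :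
    ∀ l : ℝ, 0 ≤ l → l ≤ 1 / m → ParetoOptimal C L (l • ηs) :=
  optimal_ray_general C L hCaff hLcvx hLhom ηs hηs m hm hm0 hm1
end
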